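/- arXiv:0908.0685 — 5 statements merged into one kernel-verified Lean document; each statement's English description precedes it below -/
import Mathlib

section
/- Let X be a complete CAT(0) space. For every nonempty bounded subset Y of X there exists a unique point c in X (the circumcenter) such that Y is contained in the closed ball of radius r_Y about c, where r_Y is the infimum of radii r such that Y is contained in some closed ball of radius r. -/
open Metric Bornology

/-- CAT(0): midpoints exist and satisfy the Bruhat–Tits CN comparison inequality. -/
def IsCAT0 (X : Type*) [MetricSpace X] : Prop :=
  ∀ x y : X, ∃ m : X, dist x m = dist x y / 2 ∧ dist y m = dist x y / 2 ∧
    ∀ z : X, dist z m ^ 2 ≤ (dist z x ^ 2 + dist z y ^ 2) / 2 - dist x y ^ 2 / 4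

/-- Translation length of an isometry. -/
noncomputable def transLen {X : Type*} [MetricSpace X] (γ : X ≃ᵢ X) : ℝ :=
  ⨅ x, dist (γ x) x

/-- An isometry is semisimple if its displacement function attains its infimum. -/
def IsSemisimple {X : Type*} [MetricSpace X] (γ : X ≃ᵢ X) : Prop :=
  ∃ x : X, dist (γ x) x = transLen γ

/-- A metrically proper action by isometries. -/
def IsProperAction {G X : Type*} [Group G] [MetricSpace X] (ρ : G →* (X ≃ᵢ X)) : Prop :=
  ∀ B : Set X, IsBounded B → {g : G | ∃ b ∈ B, ρ g b ∈ B}.Finite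

/-- Covering dimension at most `n`: every open cover has an open refinement of
multiplicity at most `n + 1`. -/
def CovDimLE (X : Type*) [TopologicalSpace X] (n : ℕ) : Prop :=
  ∀ (ι : Type) (U : ι → Set X), (∀ i, IsOpen (U i)) → (⋃ i, U i) = Set.univ →
    ∃ (κ : Type) (V : κ → Set X), (∀ k, IsOpen (V k)) ∧ (⋃ k, V k) = Set.univ ∧
      (∀ k, ∃ i, V k ⊆ U i) ∧
      ∀ x : X, ∃ s : Finset κ, s.card ≤ n + 1 ∧ ∀ k, x ∈ V k → k ∈ s

/-- Convexity: a set containing every point lying between two of its points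
(in a CAT(0) space this is the geodesic segment). -/
def GeodConvex {X : Type*} [MetricSpace X] (C : Set X) : Prop :=
  ∀ x ∈ C, ∀ y ∈ C, ∀ z : X, dist x z + dist z y = dist x y → z ∈ C

/-!
The squared radius `x ↦ (sup_{y ∈ Y} d(y, x))²` inherits from the CN inequality a uniform
midpoint convexity: some point `m` has value at most the average at `x` and `x'` minus
`d(x, x')² / 4`. Hence any two near-minimizers are close, so a minimizing sequence is Cauchy,
its limit is a minimizer, and two minimizers coincide. The minimal value is `r_Y`.
-/

open Filter Topology

section MidpointConvex

variable {X : Type*}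

theorem dist_sq_le_of_midpoint_convex [PseudoMetricSpace X] {h : X → ℝ} {a : ℝ}
    (hmid : ∀ x y, ∃ m, h m ≤ (h x + h y) / 2 - dist x y ^ 2 / 4) (ha : ∀ x, a ≤ h x)
    (x y : X) : dist x y ^ 2 ≤ 2 * (h x - a) + 2 * (h y - a) := by
  obtain ⟨m, hm⟩ := hmid x y
  linarith [ha m]

theorem eq_of_forall_le_of_midpoint_convex [MetricSpace X] {h : X → ℝ}
    (hmid : ∀ x y, ∃ m, h m ≤ (h x + h y) / 2 - dist x y ^ 2 / 4) {c c' : X}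
    (hc : ∀ x, h c ≤ h x) (hc' : ∀ x, h c' ≤ h x) : c = c' := by
  have hle := dist_sq_le_of_midpoint_convex hmid hc c c'
  have hcc' : h c' ≤ h c := hc' c
  exact dist_le_zero.1 (by nlinarith [dist_nonneg (x := c) (y := c')])

theorem exists_forall_le_of_midpoint_convex [PseudoMetricSpace X] [CompleteSpace X] [Nonempty X]
    {h : X → ℝ} (hcont : Continuous h) (hbdd : BddBelow (Set.range h))
    (hmid : ∀ x y, ∃ m, h m ≤ (h x + h y) / 2 - dist x y ^ 2 / 4) :
    ∃ c, ∀ x, h c ≤ h x := by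
  set a := ⨅ x, h x
  have ha : ∀ x, a ≤ h x := ciInf_le hbdd
  set ε : ℕ → ℝ := fun n => 1 / ((n : ℝ) + 1)
  have hε_pos : ∀ n, 0 < ε n := fun n => by positivity
  have hε_anti : Antitone ε := fun N n hNn => by
    simp only [ε]
    gcongr
  have hε_lim : Tendsto ε atTop (𝓝 0) := tendsto_one_div_add_atTop_nhds_zero_nat
  have happrox : ∀ n, ∃ x, h x < a + ε n ^ 2 := fun n =>
    exists_lt_of_ciInf_lt (lt_add_of_pos_right a (pow_pos (hε_pos n) 2))
  choose u hu using happrox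
  have hdist : ∀ n m N, N ≤ n → N ≤ m → dist (u n) (u m) ≤ 2 * ε N := by
    intro n m N hn hm
    have hsq : dist (u n) (u m) ^ 2 ≤ (2 * ε N) ^ 2 := by
      have hεn := pow_le_pow_left₀ (hε_pos n).le (hε_anti hn) 2
      have hεm := pow_le_pow_left₀ (hε_pos m).le (hε_anti hm) 2
      nlinarith [dist_sq_le_of_midpoint_convex hmid ha (u n) (u m), hu n, hu m]
    exact (pow_le_pow_iff_left₀ dist_nonneg (by linarith [hε_pos N]) two_ne_zero).1 hsq
  obtain ⟨c, hc⟩ := cauchySeq_tendsto_of_complete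
    (cauchySeq_of_le_tendsto_0 _ hdist (by simpa using hε_lim.const_mul 2))
  have hlim : Tendsto (h ∘ u) atTop (𝓝 a) := by
    refine tendsto_of_tendsto_of_tendsto_of_le_of_le tendsto_const_nhds ?_
      (fun n => ha (u n)) (fun n => (hu n).le)
    simpa using tendsto_const_nhds.add (hε_lim.pow 2)
  have hca : h c = a := tendsto_nhds_unique ((hcont.tendsto c).comp hc) hlim
  exact ⟨c, hca ▸ ha⟩

end MidpointConvex

/-- Junk value `0` unless `Y` is bounded and nonempty. -/
noncomputable def supDist {X : Type*} [PseudoMetricSpace X] (x : X) (Y : Set X) : ℝ :=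
  ⨆ y : Y, dist (y : X) x

section SupDist

variable {X : Type*} [PseudoMetricSpace X] {Y : Set X}

theorem dist_le_supDist (hY : IsBounded Y) {x y : X} (hy : y ∈ Y) : dist y x ≤ supDist x Y := by
  obtain ⟨R, hR⟩ := hY.subset_closedBall x
  exact le_ciSup (f := fun y : Y => dist (y : X) x)
    ⟨R, by rintro _ ⟨z, rfl⟩; exact hR z.2⟩ ⟨y, hy⟩

theorem supDist_le_iff (hY : IsBounded Y) (hne : Y.Nonempty) {x : X} {r : ℝ} :
    supDist x Y ≤ r ↔ Y ⊆ closedBall x r := by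
  have : Nonempty Y := hne.to_subtype
  exact ⟨fun h y hy => (dist_le_supDist hY hy).trans h,
    fun h => ciSup_le fun y => mem_closedBall.1 (h y.2)⟩

theorem supDist_nonneg (hY : IsBounded Y) (hne : Y.Nonempty) (x : X) : 0 ≤ supDist x Y :=
  dist_nonneg.trans (dist_le_supDist hY hne.some_mem)

theorem lipschitzWith_supDist (hY : IsBounded Y) (hne : Y.Nonempty) :
    LipschitzWith 1 (supDist · Y) :=
  LipschitzWith.of_le_add fun x x' => (supDist_le_iff hY hne).2 fun y hy =>
    mem_closedBall.2 <| (dist_triangle y x' x).trans <| by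
      rw [dist_comm x' x]
      exact add_le_add_left (dist_le_supDist hY hy) _

theorem isGLB_supDist (hY : IsBounded Y) (hne : Y.Nonempty) :
    IsGLB (Set.range (supDist · Y)) (sInf {r : ℝ | 0 < r ∧ ∃ x : X, Y ⊆ closedBall x r}) := by
  set S := {r : ℝ | 0 < r ∧ ∃ x : X, Y ⊆ closedBall x r}
  have hS_bdd : BddBelow S := ⟨0, fun r hr => hr.1.le⟩
  have hS_ne : S.Nonempty := ⟨supDist hne.some Y + 1,
    by linarith [supDist_nonneg hY hne hne.some], hne.some, (supDist_le_iff hY hne).1 (by simp)⟩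
  refine ⟨?_, fun b hb => le_csInf hS_ne ?_⟩
  · rintro _ ⟨x, rfl⟩
    refine le_of_forall_pos_le_add fun δ hδ => csInf_le hS_bdd ⟨?_, x, ?_⟩
    · linarith [supDist_nonneg hY hne x]
    · exact (supDist_le_iff hY hne).1 (le_add_of_nonneg_right hδ.le)
  · rintro r ⟨-, x, hx⟩
    exact (hb ⟨x, rfl⟩).trans ((supDist_le_iff hY hne).2 hx)

end SupDist

theorem IsCAT0.exists_supDist_sq_midpoint_le {X : Type*} [MetricSpace X] (hX : IsCAT0 X)
    {Y : Set X} (hY : IsBounded Y) (hne : Y.Nonempty) (x x' : X) :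
    ∃ m, supDist m Y ^ 2 ≤ (supDist x Y ^ 2 + supDist x' Y ^ 2) / 2 - dist x x' ^ 2 / 4 := by
  obtain ⟨m, -, -, hm⟩ := hX x x'
  refine ⟨m, ?_⟩
  set B := (supDist x Y ^ 2 + supDist x' Y ^ 2) / 2 - dist x x' ^ 2 / 4 with hB
  have hdist : ∀ y ∈ Y, dist y m ^ 2 ≤ B := fun y hy => by
    have hx := pow_le_pow_left₀ dist_nonneg (dist_le_supDist hY hy (x := x)) 2
    have hx' := pow_le_pow_left₀ dist_nonneg (dist_le_supDist hY hy (x := x')) 2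
    linarith [hm y, hB]
  have hB_nonneg : 0 ≤ B := (sq_nonneg _).trans (hdist _ hne.some_mem)
  have hsqrt : supDist m Y ≤ √B := (supDist_le_iff hY hne).2 fun y hy =>
    mem_closedBall.2 (Real.le_sqrt_of_sq_le (hdist y hy))
  exact (Real.le_sqrt (supDist_nonneg hY hne m) hB_nonneg).1 hsqrt

/-- Circumcenter: every nonempty bounded subset of a complete CAT(0) space is
contained in a unique closed ball of the minimal radius `r_Y`. -/
theorem circumcenter_exists_unique {X : Type*} [MetricSpace X] [CompleteSpace X]
    (hX : IsCAT0 X) (Y : Set X) (hne : Y.Nonempty) (hbd : IsBounded Y) :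
    ∃! c : X, Y ⊆ closedBall c (sInf {r : ℝ | 0 < r ∧ ∃ x : X, Y ⊆ closedBall x r}) := by
  have : Nonempty X := hne.to_subtype.map Subtype.val
  have hglb := isGLB_supDist hbd hne
  have hmid := hX.exists_supDist_sq_midpoint_le hbd hne
  have hsq_le {x x' : X} : supDist x Y ^ 2 ≤ supDist x' Y ^ 2 ↔ supDist x Y ≤ supDist x' Y :=
    pow_le_pow_iff_left₀ (supDist_nonneg hbd hne x) (supDist_nonneg hbd hne x') two_ne_zero
  obtain ⟨c, hc⟩ := exists_forall_le_of_midpoint_convex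
    (((lipschitzWith_supDist hbd hne).continuous).pow 2)
    ⟨0, by rintro _ ⟨x, rfl⟩; exact sq_nonneg _⟩ hmid
  refine ⟨c, (supDist_le_iff hbd hne).1 (hglb.2 ?_), fun c' hc' => ?_⟩
  · rintro _ ⟨x, rfl⟩
    exact hsq_le.1 (hc x)
  · refine eq_of_forall_le_of_midpoint_convex hmid (fun x => hsq_le.2 ?_) hc
    exact ((supDist_le_iff hbd hne).2 hc').trans (hglb.1 ⟨x, rfl⟩)
end

section
/- Let X be a complete CAT(0) space and let H1, H2 be commuting subgroups of Isom(X) (every element of H1 commutes with every element of H2). If Fix(H1) and Fix(H2) are both nonempty, then Fix(H1) ∩ Fix(H2) is nonempty. -/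
/-
The CN inequality makes the circumradius `x ↦ sup_{s ∈ S} d(x, s)` of a bounded set `S`
uniformly convex: `d(x, y)² ≤ 2 (r(x)² + r(y)²) - 4 (inf r)²`. Hence minimizing sequences are
Cauchy, and in a complete space the circumcenter exists and is unique, so it is fixed by every
isometry preserving `S`. Take `S` to be the `H₁`-orbit of a point fixed by `H₂`: it is bounded
because `H₁` fixes a point, it is `H₁`-invariant, and `H₂` fixes it pointwise because `H₂`
commutes with `H₁`.
-/

open Metric Bornology

section Circumradius

variable {X : Type*} [MetricSpace X] {S : Set X} {x y : X}

noncomputable def circumradius (S : Set X) (x : X) : ℝ :=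
  sSup (dist x '' S)

lemma dist_le_circumradius (hS : IsBounded S) {s : X} (hs : s ∈ S) :
    dist x s ≤ circumradius S x := by
  obtain ⟨r, hr⟩ := hS.subset_closedBall x
  refine le_csSup ⟨r, Set.forall_mem_image.2 fun t ht => ?_⟩ ⟨s, hs, rfl⟩
  simpa [dist_comm] using hr ht

lemma circumradius_le (hne : S.Nonempty) {r : ℝ} (h : ∀ s ∈ S, dist x s ≤ r) :
    circumradius S x ≤ r :=
  csSup_le (hne.image _) (Set.forall_mem_image.2 h)

lemma circumradius_nonneg (hS : IsBounded S) (hne : S.Nonempty) : 0 ≤ circumradius S x :=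
  dist_nonneg.trans (dist_le_circumradius hS hne.some_mem)

lemma circumradius_le_add_dist (hS : IsBounded S) (hne : S.Nonempty) :
    circumradius S x ≤ circumradius S y + dist x y :=
  circumradius_le hne fun s hs => calc
    dist x s ≤ dist x y + dist y s := dist_triangle _ _ _
    _ ≤ circumradius S y + dist x y := by linarith [dist_le_circumradius (x := y) hS hs]

lemma continuous_circumradius (hS : IsBounded S) (hne : S.Nonempty) :
    Continuous (circumradius S) :=
  (LipschitzWith.of_le_add fun _ _ => circumradius_le_add_dist hS hne).continuous

lemma circumradius_apply_of_image_eq {g : X ≃ᵢ X} (hg : g '' S = S) (x : X) :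
    circumradius S (g x) = circumradius S x := by
  unfold circumradius
  conv_lhs => rw [← hg, Set.image_image]
  simp only [g.dist_eq]

lemma circumradius_sq_le_of_forall_dist_sq_le (hS : IsBounded S) (hne : S.Nonempty) {R : ℝ}
    (h : ∀ s ∈ S, dist x s ^ 2 ≤ R) : circumradius S x ^ 2 ≤ R := by
  have hR : 0 ≤ R := (sq_nonneg _).trans (h _ hne.some_mem)
  have hle : circumradius S x ≤ √R :=
    circumradius_le hne fun s hs => Real.le_sqrt_of_sq_le (h s hs)
  calc circumradius S x ^ 2 ≤ √R ^ 2 := pow_le_pow_left₀ (circumradius_nonneg hS hne) hle 2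
    _ = R := Real.sq_sqrt hR

end Circumradius

section CAT0

variable {X : Type*} [MetricSpace X] {S : Set X}

lemma IsCAT0.exists_circumradius_sq_le (hX : IsCAT0 X) (hS : IsBounded S) (hne : S.Nonempty)
    (x y : X) : ∃ m, circumradius S m ^ 2 ≤
      (circumradius S x ^ 2 + circumradius S y ^ 2) / 2 - dist x y ^ 2 / 4 := by
  obtain ⟨m, -, -, hcn⟩ := hX x y
  refine ⟨m, circumradius_sq_le_of_forall_dist_sq_le hS hne fun s hs => ?_⟩
  have hx : dist s x ≤ circumradius S x := dist_comm x s ▸ dist_le_circumradius hS hs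
  have hy : dist s y ≤ circumradius S y := dist_comm y s ▸ dist_le_circumradius hS hs
  calc dist m s ^ 2 = dist s m ^ 2 := by rw [dist_comm]
    _ ≤ (dist s x ^ 2 + dist s y ^ 2) / 2 - dist x y ^ 2 / 4 := hcn s
    _ ≤ _ := by gcongr

lemma IsCAT0.dist_sq_le_circumradius (hX : IsCAT0 X) (hS : IsBounded S) (hne : S.Nonempty)
    (x y : X) : dist x y ^ 2 ≤
      2 * (circumradius S x ^ 2 + circumradius S y ^ 2) - 4 * (⨅ z, circumradius S z) ^ 2 := by
  obtain ⟨m, hm⟩ := hX.exists_circumradius_sq_le hS hne x y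
  have hbdd : BddBelow (Set.range (circumradius S)) :=
    ⟨0, Set.forall_mem_range.2 fun _ => circumradius_nonneg hS hne⟩
  have h0 : 0 ≤ ⨅ z, circumradius S z := Real.iInf_nonneg fun _ => circumradius_nonneg hS hne
  have hinf : (⨅ z, circumradius S z) ^ 2 ≤ circumradius S m ^ 2 :=
    pow_le_pow_left₀ h0 (ciInf_le hbdd m) 2
  linarith

end CAT0

theorem exists_eq_iInf_of_dist_sq_le {X : Type*} [MetricSpace X] [CompleteSpace X] [Nonempty X]
    {f : X → ℝ} (hf : Continuous f) (hf0 : ∀ x, 0 ≤ f x)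
    (h : ∀ x y, dist x y ^ 2 ≤ 2 * (f x ^ 2 + f y ^ 2) - 4 * (⨅ z, f z) ^ 2) :
    ∃ c, f c = ⨅ z, f z := by
  have hbdd : BddBelow (Set.range f) := ⟨0, Set.forall_mem_range.2 hf0⟩
  obtain ⟨v, hv_anti, hv_lim, hv_mem⟩ := exists_seq_tendsto_sInf (Set.range_nonempty f) hbdd
  rw [sInf_range] at hv_lim
  choose u hu using hv_mem
  set r := ⨅ z, f z
  have hcauchy : CauchySeq u := by
    refine cauchySeq_of_le_tendsto_0 (fun N => √(4 * v N ^ 2 - 4 * r ^ 2))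
      (fun n m N hn hm => Real.le_sqrt_of_sq_le ?_) ?_
    · have hnm := h (u n) (u m)
      rw [hu, hu] at hnm
      have hvn : v n ^ 2 ≤ v N ^ 2 := pow_le_pow_left₀ (hu n ▸ hf0 (u n)) (hv_anti hn) 2
      have hvm : v m ^ 2 ≤ v N ^ 2 := pow_le_pow_left₀ (hu m ▸ hf0 (u m)) (hv_anti hm) 2
      linarith
    · convert (((hv_lim.pow 2).const_mul 4).sub_const (4 * r ^ 2)).sqrt
      simp
  obtain ⟨c, hc⟩ := cauchySeq_tendsto_of_complete hcauchy
  refine ⟨c, tendsto_nhds_unique ((hf.tendsto c).comp hc) ?_⟩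
  simpa [Function.comp_def, hu] using hv_lim

lemma IsCAT0.exists_forall_apply_eq_of_image_eq {X : Type*} [MetricSpace X] [CompleteSpace X]
    (hX : IsCAT0 X) {S : Set X} (hS : IsBounded S) (hne : S.Nonempty) :
    ∃ c : X, ∀ g : X ≃ᵢ X, g '' S = S → g c = c := by
  have : Nonempty X := ⟨hne.some⟩
  obtain ⟨c, hc⟩ := exists_eq_iInf_of_dist_sq_le (continuous_circumradius hS hne)
    (fun _ => circumradius_nonneg hS hne) (hX.dist_sq_le_circumradius hS hne)
  refine ⟨c, fun g hg => dist_eq_zero.1 ((sq_nonpos_iff _).1 ?_)⟩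
  have := hX.dist_sq_le_circumradius hS hne (g c) c
  rw [circumradius_apply_of_image_eq hg, hc] at this
  linarith

section Orbit

variable {X : Type*} [MetricSpace X]

lemma isBounded_image_apply_of_forall_apply_eq {T : Set (X ≃ᵢ X)} {x₀ : X}
    (hx₀ : ∀ g ∈ T, g x₀ = x₀) (x : X) : IsBounded ((fun g : X ≃ᵢ X => g x) '' T) :=
  (isBounded_closedBall (x := x₀) (r := dist x x₀)).subset <| Set.image_subset_iff.2
    fun g hg => by simp [Metric.mem_closedBall, ← g.dist_eq x x₀, hx₀ g hg]

open scoped Pointwise in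
lemma image_image_apply_of_mem {H : Subgroup (X ≃ᵢ X)} {h : X ≃ᵢ X} (hh : h ∈ H) (x : X) :
    h '' ((fun g : X ≃ᵢ X => g x) '' H) = (fun g : X ≃ᵢ X => g x) '' H := by
  conv_rhs => rw [← smul_coe_set hh, ← Set.image_smul, Set.image_image]
  rw [Set.image_image]
  rfl

lemma image_image_apply_of_commute {T : Set (X ≃ᵢ X)} {h : X ≃ᵢ X}
    (hcomm : ∀ g ∈ T, g * h = h * g) {x : X} (hx : h x = x) :
    h '' ((fun g : X ≃ᵢ X => g x) '' T) = (fun g : X ≃ᵢ X => g x) '' T :=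
  Set.EqOn.image_eq_self <| Set.forall_mem_image.2 fun g hg => by
    change (h * g) x = g x
    rw [← hcomm g hg, IsometryEquiv.mul_apply, hx]

end Orbit

/-- Commuting subgroups of isometries of a complete CAT(0) space with nonempty
fixed-point sets have a common fixed point. -/
theorem commuting_fixed_points {X : Type*} [MetricSpace X] [CompleteSpace X]
    (hX : IsCAT0 X) (H₁ H₂ : Subgroup (X ≃ᵢ X))
    (hcomm : ∀ h₁ ∈ H₁, ∀ h₂ ∈ H₂, h₁ * h₂ = h₂ * h₁)
    (hf₁ : ∃ x : X, ∀ h ∈ H₁, h x = x) (hf₂ : ∃ x : X, ∀ h ∈ H₂, h x = x) :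
    ∃ x : X, (∀ h ∈ H₁, h x = x) ∧ (∀ h ∈ H₂, h x = x) := by
  obtain ⟨x₁, hx₁⟩ := hf₁
  obtain ⟨x₂, hx₂⟩ := hf₂
  obtain ⟨c, hc⟩ := hX.exists_forall_apply_eq_of_image_eq
    (isBounded_image_apply_of_forall_apply_eq hx₁ x₂) ⟨x₂, 1, H₁.one_mem, rfl⟩
  exact ⟨c, fun h hh => hc h (image_image_apply_of_mem hh x₂),
    fun h hh => hc h (image_image_apply_of_commute (fun g hg => hcomm g hg h hh) (hx₂ h hh))⟩
end

section
/- Let X be a complete CAT(0) space and let H1, …, Hℓ be pairwise commuting subgroups of Isom(X). If each Fix(Hi) is nonempty, then the intersection of all the Fix(Hi) is nonempty. -/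
open Metric Bornology

/-! Induction on the number of subgroups. The common fixed set `C` of the first ones is closed,
convex and nonempty, and the next subgroup `K` preserves it because it commutes with them. So if
`y` is fixed by `K`, then `K` also fixes the nearest point of `C` to `y`, which is unique since
`X` is CAT(0). -/

open Filter Topology

namespace IsCAT0

variable {X : Type*} [MetricSpace X]

theorem eq_of_dist_add_dist_eq (hX : IsCAT0 X) {x y z z' : X}
    (hz : dist x z + dist z y = dist x y) (hz' : dist x z' + dist z' y = dist x y)
    (hxz : dist x z = dist x z') : z = z' := by
  by_contra hne
  have hpos : 0 < dist z z' := dist_pos.2 hne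
  obtain ⟨m, -, -, hm⟩ := hX z z'
  have hxm : dist x m < dist x z := by
    nlinarith [hm x, dist_nonneg (x := x) (y := m), dist_nonneg (x := x) (y := z)]
  have hym : dist y m < dist y z := by
    rw [dist_comm z y] at hz
    rw [dist_comm z' y] at hz'
    nlinarith [hm y, dist_nonneg (x := y) (y := m), dist_nonneg (x := y) (y := z)]
  linarith [dist_triangle x m y, dist_comm y m, dist_comm y z]

theorem exists_midpoint_mem (hX : IsCAT0 X) {C : Set X} (hC : GeodConvex C) {c c' : X}
    (hc : c ∈ C) (hc' : c' ∈ C) :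
    ∃ m ∈ C, ∀ z : X, dist z m ^ 2 ≤ (dist z c ^ 2 + dist z c' ^ 2) / 2 - dist c c' ^ 2 / 4 := by
  obtain ⟨m, hcm, hc'm, hm⟩ := hX c c'
  exact ⟨m, hC c hc c' hc' m (by rw [dist_comm m c']; linarith), hm⟩

theorem dist_sq_le_of_mem (hX : IsCAT0 X) {C : Set X} (hC : GeodConvex C) (y : X) {c c' : X}
    (hc : c ∈ C) (hc' : c' ∈ C) :
    dist c c' ^ 2 ≤ 2 * dist y c ^ 2 + 2 * dist y c' ^ 2 - 4 * infDist y C ^ 2 := by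
  obtain ⟨m, hmC, hm⟩ := hX.exists_midpoint_mem hC hc hc'
  have hd : infDist y C ≤ dist y m := infDist_le_dist_of_mem hmC
  nlinarith [hm y, infDist_nonneg (x := y) (s := C)]

theorem eq_of_dist_le_infDist (hX : IsCAT0 X) {C : Set X} (hC : GeodConvex C) {y p q : X}
    (hp : p ∈ C) (hq : q ∈ C) (hyp : dist y p ≤ infDist y C) (hyq : dist y q ≤ infDist y C) :
    p = q := by
  refine dist_le_zero.1 ?_
  nlinarith [hX.dist_sq_le_of_mem hC y hp hq, dist_nonneg (x := y) (y := p),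
    dist_nonneg (x := y) (y := q), dist_nonneg (x := p) (y := q)]

/-- Minimizing sequences are Cauchy by `dist_sq_le_of_mem`. -/
theorem exists_dist_eq_infDist [CompleteSpace X] (hX : IsCAT0 X) {C : Set X} (hCc : IsClosed C)
    (hC : GeodConvex C) (hne : C.Nonempty) (y : X) : ∃ p ∈ C, dist y p = infDist y C := by
  set d := infDist y C
  obtain ⟨c, hcC, hyc⟩ : ∃ c : ℕ → X, (∀ n, c n ∈ C) ∧ ∀ n, dist y (c n) < d + 1 / (n + 1) := by
    choose c hcC hyc using fun n : ℕ => (infDist_lt_iff hne).1 (lt_add_of_pos_right d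
      (Nat.one_div_pos_of_nat (n := n)))
    exact ⟨c, hcC, hyc⟩
  have hbound : ∀ n m N : ℕ, N ≤ n → N ≤ m →
      dist (c n) (c m) ≤ √(4 * ((d + 1 / (N + 1)) ^ 2 - d ^ 2)) := by
    intro n m N hn hm
    have hn' := (hyc n).trans_le (add_le_add_right (Nat.one_div_le_one_div hn) d)
    have hm' := (hyc m).trans_le (add_le_add_right (Nat.one_div_le_one_div hm) d)
    refine Real.le_sqrt_of_sq_le ?_
    nlinarith [hX.dist_sq_le_of_mem hC y (hcC n) (hcC m), dist_nonneg (x := y) (y := c n),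
      dist_nonneg (x := y) (y := c m)]
  have hbound_lim : Tendsto (fun N : ℕ => √(4 * ((d + 1 / (N + 1)) ^ 2 - d ^ 2))) atTop (𝓝 0) := by
    have hcont : Continuous fun t : ℝ => √(4 * ((d + t) ^ 2 - d ^ 2)) := by fun_prop
    have := (hcont.tendsto 0).comp tendsto_one_div_add_atTop_nhds_zero_nat
    simpa only [add_zero, sub_self, mul_zero, Real.sqrt_zero, Function.comp_def] using this
  obtain ⟨p, hp⟩ := cauchySeq_tendsto_of_complete (cauchySeq_of_le_tendsto_0 _ hbound hbound_lim)
  have hpC : p ∈ C := hCc.mem_of_tendsto hp (Eventually.of_forall hcC)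
  have hyp : dist y p ≤ d := le_of_tendsto_of_tendsto' (tendsto_const_nhds.dist hp)
    (by simpa using tendsto_one_div_add_atTop_nhds_zero_nat.const_add d) fun n => (hyc n).le
  exact ⟨p, hpC, hyp.antisymm (infDist_le_dist_of_mem hpC)⟩

end IsCAT0

namespace IsometryEquiv

variable {X : Type*} [MetricSpace X]

def fixedSet (S : Set (X ≃ᵢ X)) : Set X :=
  {x | ∀ g ∈ S, g x = x}

theorem fixedSet_union (S T : Set (X ≃ᵢ X)) : fixedSet (S ∪ T) = fixedSet S ∩ fixedSet T := by
  ext x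
  simp only [fixedSet, Set.mem_union, or_imp, forall_and, Set.mem_ofPred_eq, Set.mem_inter_iff]

theorem isClosed_fixedSet (S : Set (X ≃ᵢ X)) : IsClosed (fixedSet S) := by
  simp only [fixedSet, Set.ofPred_forall]
  exact isClosed_biInter fun g _ => isClosed_eq g.continuous continuous_id

theorem geodConvex_fixedSet (hX : IsCAT0 X) (S : Set (X ≃ᵢ X)) : GeodConvex (fixedSet S) := by
  intro x hx y hy z hz g hg
  refine hX.eq_of_dist_add_dist_eq (x := x) (y := y) ?_ hz ?_
  · rw [← hx g hg, ← hy g hg, g.dist_eq, g.dist_eq, g.dist_eq]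
    exact hz
  · rw [← g.dist_eq x z, hx g hg]

theorem mapsTo_fixedSet {S : Set (X ≃ᵢ X)} {g : X ≃ᵢ X} (hg : ∀ s ∈ S, s * g = g * s) :
    Set.MapsTo g (fixedSet S) (fixedSet S) := fun x hx s hs => by
  rw [← mul_apply, hg s hs, mul_apply, hx s hs]

theorem fixedSet_inter_nonempty_of_commute (hX : IsCAT0 X) [CompleteSpace X]
    {S K : Set (X ≃ᵢ X)} (hS : (fixedSet S).Nonempty) (hK : (fixedSet K).Nonempty)
    (hcomm : ∀ s ∈ S, ∀ k ∈ K, s * k = k * s) : (fixedSet S ∩ fixedSet K).Nonempty := by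
  obtain ⟨y, hy⟩ := hK
  obtain ⟨p, hpS, hyp⟩ :=
    hX.exists_dist_eq_infDist (isClosed_fixedSet S) (geodConvex_fixedSet hX S) hS y
  refine ⟨p, hpS, fun k hk => ?_⟩
  have hkpS : k p ∈ fixedSet S := mapsTo_fixedSet (fun s hs => hcomm s hs k hk) hpS
  refine hX.eq_of_dist_le_infDist (geodConvex_fixedSet hX S) hkpS hpS ?_ hyp.le
  rw [← hyp, ← k.dist_eq y p, hy k hk]

end IsometryEquiv

/-- Finitely many pairwise commuting subgroups of isometries of a complete CAT(0)
space, each with a fixed point, have a common fixed point. -/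
theorem commuting_fixed_points_finite {X : Type*} [MetricSpace X] [CompleteSpace X]
    [Nonempty X] (hX : IsCAT0 X) {ι : Type*} [Finite ι] (H : ι → Subgroup (X ≃ᵢ X))
    (hcomm : ∀ i j, i ≠ j → ∀ h₁ ∈ H i, ∀ h₂ ∈ H j, h₁ * h₂ = h₂ * h₁)
    (hfix : ∀ i, ∃ x : X, ∀ h ∈ H i, h x = x) :
    ∃ x : X, ∀ i, ∀ h ∈ H i, h x = x := by
  classical
  have key (s : Finset ι) :
      (IsometryEquiv.fixedSet (⋃ i ∈ s, (H i : Set (X ≃ᵢ X)))).Nonempty := by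
    induction s using Finset.induction_on with
    | empty => simp [IsometryEquiv.fixedSet]
    | insert a s ha ih =>
      rw [Finset.set_biUnion_insert, Set.union_comm, IsometryEquiv.fixedSet_union]
      refine IsometryEquiv.fixedSet_inter_nonempty_of_commute hX ih (hfix a) ?_
      simp only [Set.mem_iUnion, SetLike.mem_coe]
      rintro g ⟨i, hi, hg⟩ h hh
      exact hcomm i a (ne_of_mem_of_not_mem hi ha) g hg h hh
  cases nonempty_fintype ι
  obtain ⟨x, hx⟩ := key Finset.univ
  exact ⟨x, fun i h hh => hx h (Set.mem_biUnion (Finset.mem_univ i) hh)⟩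
end

section
/- Let X be a metric space and let a group G act by isometries on the n-fold product Xⁿ (with the product metric) by permuting coordinates and acting in each factor, such that some power of each g ∈ G preserves the factors. If for each g the restriction of a suitable power of g to each factor is a semisimple isometry of X, and X is complete CAT(0), then g acts as a semisimple isometry of Xⁿ. -/
/-!
`g ^ k` is semisimple as a product of semisimple isometries, and the ℓ²-product of complete
CAT(0) spaces is complete CAT(0), so it remains to take `k`-th roots: if `γ ^ k` is semisimple
on a complete CAT(0) space `E`, so is `γ`.

On `E ^ (ZMod k)` let `T y = (γ (y (i + 1)))ᵢ`. Untwisting by `y i ↦ γ ^ i (y i)` turns the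
displacement of `T` into the energy of a `k`-step chain from a point to its image under `γ ^ k`,
so `T` attains its minimal displacement at an equally spaced chain from a minimal point of `γ ^ k`
to its image. The minimal set of `T` is closed, convex and invariant under the cyclic shift of
coordinates, which has order `k`; the barycentre of a shift orbit in it is fixed by the shift,
hence a constant tuple `(x, …, x)`, at which `T` displaces by `√k · d(γ x, x)`, so `x` has minimal
displacement for `γ`.

Points dividing a segment in a given ratio and barycentres both come from one fact: on a complete
CAT(0) space a continuous function that is uniformly convex along midpoints attains its minimum.
-/

open Metric Bornology

open Filter Topology

namespace IsCAT0

variable {E : Type*} [MetricSpace E] (hE : IsCAT0 E)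

noncomputable def midpoint (x y : E) : E := (hE x y).choose

lemma dist_midpoint_left (x y : E) : dist x (hE.midpoint x y) = dist x y / 2 :=
  (hE x y).choose_spec.1

lemma dist_midpoint_right (x y : E) : dist y (hE.midpoint x y) = dist x y / 2 :=
  (hE x y).choose_spec.2.1

lemma dist_midpoint_sq_le (x y z : E) :
    dist z (hE.midpoint x y) ^ 2 ≤ (dist z x ^ 2 + dist z y ^ 2) / 2 - dist x y ^ 2 / 4 :=
  (hE x y).choose_spec.2.2 z

include hE in
lemma exists_midpoint (x y : E) : ∃ m, dist x m = dist x y / 2 ∧ dist m y = dist x y / 2 :=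
  ⟨hE.midpoint x y, hE.dist_midpoint_left x y, dist_comm y _ ▸ hE.dist_midpoint_right x y⟩

lemma eq_midpoint {x y m : E} (hx : dist x m = dist x y / 2) (hy : dist y m = dist x y / 2) :
    m = hE.midpoint x y := by
  have h := hE.dist_midpoint_sq_le x y m
  rw [dist_comm m x, dist_comm m y, hx, hy] at h
  exact dist_eq_zero.mp ((sq_nonpos_iff _).mp (by linarith))

lemma midpoint_comm (x y : E) : hE.midpoint x y = hE.midpoint y x :=
  (hE.eq_midpoint (by rw [hE.dist_midpoint_right, dist_comm])
    (by rw [hE.dist_midpoint_left, dist_comm])).symm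

lemma map_midpoint {f : E → E} (hf : Isometry f) (x y : E) :
    f (hE.midpoint x y) = hE.midpoint (f x) (f y) :=
  hE.eq_midpoint (by rw [hf.dist_eq, hf.dist_eq, hE.dist_midpoint_left])
    (by rw [hf.dist_eq, hf.dist_eq, hE.dist_midpoint_right])

lemma dist_midpoint_midpoint_right_le (x y y' : E) :
    dist (hE.midpoint x y) (hE.midpoint x y') ≤ dist y y' / 2 := by
  have h₁ := hE.dist_midpoint_sq_le x y' y
  have h₂ := hE.dist_midpoint_sq_le x y (hE.midpoint x y')
  rw [dist_comm _ x, hE.dist_midpoint_left, dist_comm (hE.midpoint x y') y,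
    dist_comm (hE.midpoint x y')] at h₂
  rw [dist_comm y x] at h₁
  refine (pow_le_pow_iff_left₀ dist_nonneg (by positivity) two_ne_zero).mp ?_
  linarith

lemma dist_midpoint_midpoint_le (x y x' y' : E) :
    dist (hE.midpoint x y) (hE.midpoint x' y') ≤ (dist x x' + dist y y') / 2 := by
  have h₁ := hE.dist_midpoint_midpoint_right_le x y y'
  have h₂ := hE.dist_midpoint_midpoint_right_le y' x x'
  rw [hE.midpoint_comm y' x, hE.midpoint_comm y' x'] at h₂
  linarith [dist_triangle (hE.midpoint x y) (hE.midpoint x y') (hE.midpoint x' y')]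

lemma dist_map_midpoint_le {T : E → E} (hT : Isometry T) (x y : E) :
    dist (T (hE.midpoint x y)) (hE.midpoint x y) ≤ (dist (T x) x + dist (T y) y) / 2 :=
  hE.map_midpoint hT x y ▸ hE.dist_midpoint_midpoint_le _ _ _ _

end IsCAT0

lemma PiLp.dist_sq_eq {ι : Type*} [Fintype ι] {β : ι → Type*} [∀ i, MetricSpace (β i)]
    (f g : PiLp 2 β) : dist f g ^ 2 = ∑ i, dist (f i) (g i) ^ 2 := by
  rw [PiLp.dist_eq_sum (by norm_num), ← Real.rpow_two, ← Real.rpow_mul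
    (Finset.sum_nonneg fun i _ => by positivity)]
  norm_num

theorem IsCAT0.piLp {ι : Type*} [Fintype ι] {β : ι → Type*} [∀ i, MetricSpace (β i)]
    (hβ : ∀ i, IsCAT0 (β i)) : IsCAT0 (PiLp 2 β) := by
  intro f g
  set m : PiLp 2 β := WithLp.toLp 2 fun i => (hβ i).midpoint (f i) (g i)
  have half : ∀ h : PiLp 2 β, (∀ i, dist (h i) (m i) = dist (f i) (g i) / 2) →
      dist h m = dist f g / 2 := by
    intro h hh
    refine (pow_left_inj₀ dist_nonneg (by positivity) two_ne_zero).mp ?_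
    simp only [PiLp.dist_sq_eq, hh, div_pow, ← Finset.sum_div]
  refine ⟨m, half f fun i => (hβ i).dist_midpoint_left _ _,
    half g fun i => (hβ i).dist_midpoint_right _ _, fun z => ?_⟩
  simp only [PiLp.dist_sq_eq, Finset.sum_div, ← Finset.sum_add_distrib,
    ← Finset.sum_sub_distrib]
  exact Finset.sum_le_sum fun i _ => (hβ i).dist_midpoint_sq_le _ _ _

section Semisimple

variable {E : Type*} [MetricSpace E]

lemma isSemisimple_iff_exists_forall_le {γ : E ≃ᵢ E} :
    IsSemisimple γ ↔ ∃ x, ∀ y, dist (γ x) x ≤ dist (γ y) y := by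
  have hbdd : BddBelow (Set.range fun y => dist (γ y) y) :=
    ⟨0, by rintro _ ⟨y, rfl⟩; exact dist_nonneg⟩
  constructor
  · rintro ⟨x, hx⟩
    exact ⟨x, fun y => hx ▸ ciInf_le hbdd y⟩
  · rintro ⟨x, hx⟩
    have : Nonempty E := ⟨x⟩
    exact ⟨x, le_antisymm (le_ciInf hx) (ciInf_le hbdd x)⟩

theorem IsSemisimple.of_forall_apply_eq {ι : Type*} [Fintype ι] {β : ι → Type*}
    [∀ i, MetricSpace (β i)] {G : PiLp 2 β ≃ᵢ PiLp 2 β} {ψ : ∀ i, β i ≃ᵢ β i}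
    (hG : ∀ f i, G f i = ψ i (f i)) (hψ : ∀ i, IsSemisimple (ψ i)) : IsSemisimple G := by
  choose x hx using fun i => isSemisimple_iff_exists_forall_le.mp (hψ i)
  refine isSemisimple_iff_exists_forall_le.mpr ⟨WithLp.toLp 2 x, fun f => ?_⟩
  refine (pow_le_pow_iff_left₀ dist_nonneg dist_nonneg two_ne_zero).mp ?_
  simp only [PiLp.dist_sq_eq, hG]
  exact Finset.sum_le_sum fun i _ => pow_le_pow_left₀ dist_nonneg (hx i (f i)) 2

end Semisimple

section UniformlyConvex

variable {E : Type*} [MetricSpace E] {Y : Set E} (m : E → E → E)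
  (hm : ∀ u ∈ Y, ∀ v ∈ Y, m u v ∈ Y) {F : E → ℝ} {c : ℝ}
  (hF : ∀ u ∈ Y, ∀ v ∈ Y, F (m u v) + c * dist u v ^ 2 ≤ (F u + F v) / 2)

include hm hF in
theorem IsComplete.exists_isMinOn_of_midpoint_uniformlyConvex (hY : IsComplete Y)
    (hne : Y.Nonempty) (hc : 0 < c) (hFc : Continuous F) (hFb : BddBelow (F '' Y)) :
    ∃ z ∈ Y, IsMinOn F Y z := by
  set ρ := sInf (F '' Y)
  have hρ : ∀ y ∈ Y, ρ ≤ F y := fun y hy => csInf_le hFb ⟨y, hy, rfl⟩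
  obtain ⟨u, hu_anti, hu_lim, hu_mem⟩ := exists_seq_tendsto_sInf (hne.image F) hFb
  choose x hxY hxu using hu_mem
  have hcauchy : CauchySeq x := by
    refine cauchySeq_of_le_tendsto_0 (fun N => √((u N - ρ) / c)) (fun p q N hp hq => ?_) ?_
    · have hmid := hF _ (hxY p) _ (hxY q)
      have := hρ _ (hm _ (hxY p) _ (hxY q))
      rw [hxu, hxu] at hmid
      refine Real.le_sqrt_of_sq_le ((le_div_iff₀ hc).mpr ?_)
      linarith [hu_anti hp, hu_anti hq]
    · simpa [ρ] using ((hu_lim.sub_const ρ).div_const c).sqrt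
  obtain ⟨z, hzY, hz⟩ := cauchySeq_tendsto_of_isComplete hY hxY hcauchy
  have hFz : F z = ρ :=
    tendsto_nhds_unique ((hFc.tendsto z).comp hz) (by simpa only [Function.comp_def, hxu])
  exact ⟨z, hzY, fun y hy => hFz ▸ hρ y hy⟩

include hm hF in
theorem eq_of_isMinOn_of_midpoint_uniformlyConvex (hc : 0 < c) {z z' : E} (hz : z ∈ Y)
    (hz' : z' ∈ Y) (hmin : IsMinOn F Y z) (hmin' : IsMinOn F Y z') : z = z' := by
  have h₁ := hF z hz z' hz'
  have h₂ : F z ≤ F (m z z') := hmin (hm z hz z' hz')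
  have h₃ : F z' ≤ F z := hmin' hz
  exact dist_eq_zero.mp ((sq_nonpos_iff _).mp (by nlinarith))

end UniformlyConvex

theorem IsCAT0.exists_fixed_of_iterate_eq {E : Type*} [MetricSpace E] (hE : IsCAT0 E)
    {Y : Set E} (hY : IsComplete Y) (hYm : ∀ u ∈ Y, ∀ v ∈ Y, hE.midpoint u v ∈ Y)
    {R : E → E} (hR : Isometry R) (hRY : Set.MapsTo R Y Y) {k : ℕ} (hk : 0 < k) {w : E}
    (hw : w ∈ Y) (hRw : R^[k] w = w) : ∃ z ∈ Y, R z = z := by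
  -- the barycentre of the orbit of `w` is unique, hence fixed by `R`
  set F : E → ℝ := fun z => ∑ j ∈ Finset.range k, dist (R^[j] w) z ^ 2
  have hF : ∀ u ∈ Y, ∀ v ∈ Y,
      F (hE.midpoint u v) + k / 4 * dist u v ^ 2 ≤ (F u + F v) / 2 := by
    intro u _ v _
    have := Finset.sum_le_sum fun j (_ : j ∈ Finset.range k) =>
      hE.dist_midpoint_sq_le u v (R^[j] w)
    simp only [Finset.sum_sub_distrib, Finset.sum_const, Finset.card_range,
      nsmul_eq_mul] at this
    simp only [F, Finset.sum_div, ← Finset.sum_add_distrib] at this ⊢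
    linarith
  have hk4 : (0 : ℝ) < k / 4 := by positivity
  have hFc : Continuous F := continuous_finsetSum _ fun j _ => by fun_prop
  have hFb : BddBelow (F '' Y) :=
    ⟨0, by rintro _ ⟨z, -, rfl⟩; exact Finset.sum_nonneg fun j _ => sq_nonneg _⟩
  obtain ⟨z, hzY, hz⟩ :=
    hY.exists_isMinOn_of_midpoint_uniformlyConvex _ hYm hF ⟨w, hw⟩ hk4 hFc hFb
  have hFR : F (R z) = F z := by
    obtain ⟨k, rfl⟩ : ∃ k', k = k' + 1 := ⟨k - 1, by omega⟩
    have hlast : dist w (R z) = dist (R^[k] w) z := by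
      rw [← hR.dist_eq (R^[k] w), ← Function.iterate_succ_apply' R k w, hRw]
    simp only [F]
    rw [Finset.sum_range_succ', Finset.sum_range_succ]
    simp only [Function.iterate_succ_apply', hR.dist_eq, Function.iterate_zero_apply, hlast]
  refine ⟨z, hzY, (eq_of_isMinOn_of_midpoint_uniformlyConvex _ hYm hF hk4 (hRY hzY) hzY ?_ hz)⟩
  exact fun y hy => hFR ▸ hz hy

lemma exists_approx_dist_eq_mul {E : Type*} [MetricSpace E]
    (hmid : ∀ x y : E, ∃ m, dist x m = dist x y / 2 ∧ dist m y = dist x y / 2) (n : ℕ) :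
    ∀ t ∈ Set.Icc (0 : ℝ) 1, ∃ s, |s - t| ≤ (1 / 2) ^ n ∧
      ∀ x y : E, ∃ z, dist x z = s * dist x y ∧ dist z y = (1 - s) * dist x y := by
  induction n with
  | zero =>
    intro t ht
    refine ⟨0, by simp [abs_of_nonneg ht.1, ht.2], fun x y => ⟨x, by simp⟩⟩
  | succ n ih =>
    intro t ht
    rcases le_total t (1 / 2) with h | h
    · obtain ⟨s, hs, hxy⟩ := ih (2 * t) ⟨by linarith [ht.1], by linarith⟩
      refine ⟨s / 2, ?_, fun x y => ?_⟩
      · rw [pow_succ, show s / 2 - t = (s - 2 * t) / 2 by ring, abs_div, abs_two]; linarith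
      obtain ⟨m, hxm, hmy⟩ := hmid x y
      obtain ⟨z, hxz, hzm⟩ := hxy x m
      rw [hxm] at hxz hzm
      have := dist_triangle z m y
      have := dist_triangle x z y
      exact ⟨z, by rw [hxz]; ring, by apply le_antisymm <;> linarith⟩
    · obtain ⟨s, hs, hxy⟩ := ih (2 * t - 1) ⟨by linarith, by linarith [ht.2]⟩
      refine ⟨(1 + s) / 2, ?_, fun x y => ?_⟩
      · rw [pow_succ, show (1 + s) / 2 - t = (s - (2 * t - 1)) / 2 by ring, abs_div, abs_two]
        linarith
      obtain ⟨m, hxm, hmy⟩ := hmid x y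
      obtain ⟨z, hmz, hzy⟩ := hxy m y
      rw [hmy] at hmz hzy
      have := dist_triangle x m z
      have := dist_triangle x z y
      exact ⟨z, by apply le_antisymm <;> linarith, by rw [hzy]; ring⟩

lemma dist_eq_mul_of_sq_le {E : Type*} [MetricSpace E] {x y z : E} {t : ℝ} (ht₀ : 0 < t)
    (ht₁ : t < 1) (h : (1 - t) * dist x z ^ 2 + t * dist z y ^ 2 ≤ t * (1 - t) * dist x y ^ 2) :
    dist x z = t * dist x y ∧ dist z y = (1 - t) * dist x y := by
  set a := dist x z
  set b := dist z y
  set D := dist x y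
  have key : ((1 - t) * a - t * b) ^ 2 + t * (1 - t) * ((a + b) ^ 2 - D ^ 2) ≤ 0 := by
    linear_combination h
  have hD : 0 ≤ (a + b) ^ 2 - D ^ 2 :=
    sub_nonneg.mpr (pow_le_pow_left₀ dist_nonneg (dist_triangle x z y) 2)
  have hpos : 0 < t * (1 - t) := mul_pos ht₀ (sub_pos.mpr ht₁)
  have hsum : a + b = D := by
    refine (pow_left_inj₀ (by positivity) dist_nonneg two_ne_zero).mp ?_
    nlinarith [sq_nonneg ((1 - t) * a - t * b)]
  have hratio : (1 - t) * a = t * b := by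
    rw [← sub_eq_zero, ← pow_eq_zero_iff two_ne_zero]
    nlinarith [sq_nonneg ((1 - t) * a - t * b), mul_nonneg hpos.le hD]
  exact ⟨by linear_combination hratio + t * hsum,
    by linear_combination -hratio + (1 - t) * hsum⟩

namespace IsCAT0

variable {E : Type*} [MetricSpace E] [CompleteSpace E] (hE : IsCAT0 E)

include hE in
theorem exists_dist_eq_mul {t : ℝ} (ht : t ∈ Set.Icc (0 : ℝ) 1) (x y : E) :
    ∃ z, dist x z = t * dist x y ∧ dist z y = (1 - t) * dist x y := by
  rcases ht.1.eq_or_lt with rfl | ht₀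
  · exact ⟨x, by simp⟩
  rcases ht.2.eq_or_lt with rfl | ht₁
  · exact ⟨y, by simp⟩
  set D := dist x y
  -- points dividing `[x, y]` in ratios close to `t` show that the minimum of `F` is at most
  -- `t (1 - t) d(x, y)²`, which only the point sought achieves
  set F : E → ℝ := fun z => (1 - t) * dist x z ^ 2 + t * dist y z ^ 2
  have hF : ∀ u ∈ Set.univ, ∀ v ∈ Set.univ,
      F (hE.midpoint u v) + 1 / 4 * dist u v ^ 2 ≤ (F u + F v) / 2 := by
    intro u _ v _
    have hx := mul_le_mul_of_nonneg_left (hE.dist_midpoint_sq_le u v x) (sub_nonneg.mpr ht.2)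
    have hy := mul_le_mul_of_nonneg_left (hE.dist_midpoint_sq_le u v y) ht.1
    simp only [F]
    linarith
  have hFb : BddBelow (F '' Set.univ) :=
    ⟨0, by rintro _ ⟨z, -, rfl⟩; have := ht.2; have := ht.1; positivity⟩
  obtain ⟨z, -, hz⟩ := isComplete_univ.exists_isMinOn_of_midpoint_uniformlyConvex _
    (fun _ _ _ _ => Set.mem_univ _) hF ⟨x, Set.mem_univ x⟩ (by norm_num) (by fun_prop) hFb
  have hFz : ∀ n : ℕ, F z ≤ t * (1 - t) * D ^ 2 + ((1 / 2) ^ n) ^ 2 * D ^ 2 := by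
    intro n
    obtain ⟨s, hs, hsxy⟩ := exists_approx_dist_eq_mul hE.exists_midpoint n t ht
    obtain ⟨w, hxw, hwy⟩ := hsxy x y
    have hs2 : (s - t) ^ 2 ≤ ((1 / 2) ^ n) ^ 2 := sq_le_sq' (abs_le.mp hs).1 (abs_le.mp hs).2
    calc F z ≤ F w := hz trivial
      _ = t * (1 - t) * D ^ 2 + (s - t) ^ 2 * D ^ 2 := by
        simp only [F, hxw, dist_comm y w, hwy]; ring
      _ ≤ _ := by gcongr
  have hFz' : F z ≤ t * (1 - t) * D ^ 2 := by
    have hlim : Tendsto (fun n : ℕ => t * (1 - t) * D ^ 2 + ((1 / 2) ^ n) ^ 2 * D ^ 2) atTop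
        (𝓝 (t * (1 - t) * D ^ 2)) := by
      simpa using (((tendsto_pow_atTop_nhds_zero_of_lt_one (by norm_num)
        (by norm_num : (1 / 2 : ℝ) < 1)).pow 2).mul_const (D ^ 2)).const_add (t * (1 - t) * D ^ 2)
    exact ge_of_tendsto' hlim hFz
  simp only [F, dist_comm y z] at hFz'
  exact ⟨z, dist_eq_mul_of_sq_le ht₀ ht₁ hFz'⟩

end IsCAT0

theorem IsCAT0.exists_chain {E : Type*} [MetricSpace E] [CompleteSpace E] (hE : IsCAT0 E)
    {k : ℕ} (hk : 0 < k) (x y : E) :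
    ∃ c : ℕ → E, c 0 = x ∧ c k = y ∧
      ∀ i < k, dist (c i) (c (i + 1)) = dist x y / k := by
  induction k, hk using Nat.le_induction generalizing x with
  | base => exact ⟨fun i => if i = 0 then x else y, by simp, by simp, by simp⟩
  | succ k hk ih =>
    have hk' : (0 : ℝ) < k := by exact_mod_cast hk
    obtain ⟨z, hxz, hzy⟩ := hE.exists_dist_eq_mul (t := 1 / (k + 1))
      ⟨by positivity, by rw [div_le_one (by positivity)]; linarith⟩ x y
    obtain ⟨c, hc0, hck, hc⟩ := ih z
    refine ⟨fun i => if i = 0 then x else c (i - 1), by simp, by simpa using hck, ?_⟩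
    rintro (_ | i) hi
    · simp [hc0, hxz, div_eq_inv_mul]
    · simp only [Nat.add_eq_zero_iff, one_ne_zero, and_false, if_false, Nat.add_sub_cancel,
        hc i (by omega), hzy]
      push_cast
      field_simp
      ring

lemma dist_sq_le_mul_sum_dist_sq {E : Type*} [MetricSpace E] (x : ℕ → E) (k : ℕ) :
    dist (x 0) (x k) ^ 2 ≤ k * ∑ i ∈ Finset.range k, dist (x i) (x (i + 1)) ^ 2 := by
  have h := sq_sum_le_card_mul_sum_sq (s := Finset.range k) (f := fun i => dist (x i) (x (i + 1)))
  rw [Finset.card_range] at h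
  exact (pow_le_pow_left₀ dist_nonneg (dist_le_range_sum_dist x k) 2).trans h

lemma ZMod.sum_eq_sum_range {M : Type*} [AddCommMonoid M] {k : ℕ} [NeZero k] (f : ZMod k → M) :
    ∑ i, f i = ∑ n ∈ Finset.range k, f n :=
  Finset.sum_nbij' ZMod.val (↑) (fun i _ => Finset.mem_range.mpr (ZMod.val_lt i))
    (fun _ _ => Finset.mem_univ _) (fun i _ => ZMod.natCast_zmod_val i)
    (fun _ hn => ZMod.val_natCast_of_lt (Finset.mem_range.mp hn)) (fun i _ => by simp)

section TwistedShift

variable {E : Type*} {k : ℕ}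

def twistedShift (f : E → E) (y : PiLp 2 fun _ : ZMod k => E) : PiLp 2 fun _ : ZMod k => E :=
  WithLp.toLp 2 fun i => f (y (i + 1))

@[simp]
lemma twistedShift_apply (f : E → E) (y : PiLp 2 fun _ : ZMod k => E) (i : ZMod k) :
    twistedShift f y i = f (y (i + 1)) :=
  rfl

lemma iterate_twistedShift_id_apply (y : PiLp 2 fun _ : ZMod k => E) (j : ℕ) (i : ZMod k) :
    (twistedShift id)^[j] y i = y (i + j) := by
  induction j generalizing y with
  | zero => simp
  | succ j ih => rw [Function.iterate_succ_apply, ih]; simp [add_assoc]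

lemma iterate_twistedShift_id_self (y : PiLp 2 fun _ : ZMod k => E) :
    (twistedShift id)^[k] y = y :=
  PiLp.ext fun i => by simp [iterate_twistedShift_id_apply]

variable [NeZero k]

lemma eq_const_of_twistedShift_id_eq {y : PiLp 2 fun _ : ZMod k => E} (hy : twistedShift id y = y) :
    y = WithLp.toLp 2 fun _ => y 0 :=
  PiLp.ext fun i => by
    simpa [iterate_twistedShift_id_apply, ZMod.natCast_zmod_val] using
      congr_fun (congrArg WithLp.ofLp (Function.iterate_fixed hy i.val)) 0

variable [MetricSpace E]

lemma isometry_twistedShift {f : E → E} (hf : Isometry f) :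
    Isometry (twistedShift (k := k) f) := by
  refine Isometry.of_dist_eq fun y y' => (pow_left_inj₀ dist_nonneg dist_nonneg two_ne_zero).mp ?_
  simp only [PiLp.dist_sq_eq, twistedShift_apply, hf.dist_eq]
  exact Fintype.sum_equiv (Equiv.addRight 1) _ _ fun i => rfl

lemma dist_twistedShift_const_sq (f : E → E) (x : E) :
    dist (twistedShift f (WithLp.toLp 2 fun _ : ZMod k => x)) (WithLp.toLp 2 fun _ => x) ^ 2 =
      k * dist (f x) x ^ 2 := by
  simp [PiLp.dist_sq_eq, ZMod.card]

lemma dist_twistedShift_sq (γ : E ≃ᵢ E) (y : PiLp 2 fun _ : ZMod k => E) :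
    dist (twistedShift γ y) y ^ 2 = ∑ n ∈ Finset.range k,
      dist ((γ ^ n) (y (n : ZMod k))) ((γ ^ (n + 1)) (y ((n + 1 : ℕ) : ZMod k))) ^ 2 := by
  rw [PiLp.dist_sq_eq, ZMod.sum_eq_sum_range]
  refine Finset.sum_congr rfl fun n _ => ?_
  rw [pow_succ γ n, IsometryEquiv.mul_apply, (γ ^ n).dist_eq, dist_comm, Nat.cast_succ,
    twistedShift_apply]

lemma dist_pow_sq_le_mul_dist_twistedShift_sq (γ : E ≃ᵢ E) (y : PiLp 2 fun _ : ZMod k => E) :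
    dist ((γ ^ k) (y 0)) (y 0) ^ 2 ≤ k * dist (twistedShift γ y) y ^ 2 := by
  rw [dist_twistedShift_sq, dist_comm]
  simpa [ZMod.natCast_self] using dist_sq_le_mul_sum_dist_sq (fun n => (γ ^ n) (y (n : ZMod k))) k

end TwistedShift

section TwistedShiftMinimal

variable {E : Type*} [MetricSpace E] [CompleteSpace E] (hE : IsCAT0 E) {k : ℕ} [NeZero k]

include hE in
theorem IsCAT0.exists_forall_dist_twistedShift_le {γ : E ≃ᵢ E} (h : IsSemisimple (γ ^ k)) :
    ∃ y₀ : PiLp 2 (fun _ : ZMod k => E), ∀ y : PiLp 2 (fun _ : ZMod k => E),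
      dist (twistedShift γ y₀) y₀ ≤ dist (twistedShift γ y) y := by
  have hk : 0 < k := Nat.pos_of_ne_zero (NeZero.ne k)
  obtain ⟨w, hw⟩ := isSemisimple_iff_exists_forall_le.mp h
  obtain ⟨c, hc0, hck, hc⟩ := hE.exists_chain hk w ((γ ^ k) w)
  set y₀ : PiLp 2 fun _ : ZMod k => E := WithLp.toLp 2 fun i => (γ ^ i.val)⁻¹ (c i.val)
  have hy₀c : ∀ n ≤ k, (γ ^ n) (y₀ (n : ZMod k)) = c n := by
    intro n hn
    rcases hn.lt_or_eq with hn | rfl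
    · simp [y₀, ZMod.val_natCast_of_lt hn]
    · simp [y₀, hc0, hck]
  have hy₀ : k * dist (twistedShift γ y₀) y₀ ^ 2 = dist ((γ ^ k) w) w ^ 2 := by
    rw [dist_twistedShift_sq, Finset.sum_congr rfl fun n hn => by
      rw [hy₀c n (Finset.mem_range.mp hn).le, hy₀c (n + 1) (Finset.mem_range.mp hn),
        hc n (Finset.mem_range.mp hn)]]
    simp only [Finset.sum_const, Finset.card_range, nsmul_eq_mul, dist_comm w]
    field_simp
  refine ⟨y₀, fun y => (pow_le_pow_iff_left₀ dist_nonneg dist_nonneg two_ne_zero).mp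
    (le_of_mul_le_mul_left ?_ (by exact_mod_cast hk : (0 : ℝ) < k))⟩
  calc _ = dist ((γ ^ k) w) w ^ 2 := hy₀
    _ ≤ dist ((γ ^ k) (y 0)) (y 0) ^ 2 := pow_le_pow_left₀ dist_nonneg (hw (y 0)) 2
    _ ≤ _ := dist_pow_sq_le_mul_dist_twistedShift_sq γ y

include hE in
theorem IsCAT0.exists_const_forall_dist_twistedShift_le {f : E → E} (hf : Isometry f)
    {y₀ : PiLp 2 fun _ : ZMod k => E}
    (hy₀ : ∀ y : PiLp 2 (fun _ : ZMod k => E),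
      dist (twistedShift f y₀) y₀ ≤ dist (twistedShift f y) y) :
    ∃ x : E, ∀ y : PiLp 2 (fun _ : ZMod k => E),
      dist (twistedShift f (WithLp.toLp 2 fun _ : ZMod k => x)) (WithLp.toLp 2 fun _ => x) ≤
        dist (twistedShift f y) y := by
  have hP : IsCAT0 (PiLp 2 fun _ : ZMod k => E) := IsCAT0.piLp fun _ => hE
  have hT : Isometry (twistedShift (k := k) f) := isometry_twistedShift hf
  have hC : Isometry (twistedShift (k := k) (id : E → E)) := isometry_twistedShift isometry_id
  set M := {y : PiLp 2 fun _ : ZMod k => E |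
    dist (twistedShift f y) y ≤ dist (twistedShift f y₀) y₀}
  have hM : IsClosed M := isClosed_le (hT.continuous.dist continuous_id) continuous_const
  have hMm : ∀ u ∈ M, ∀ v ∈ M, hP.midpoint u v ∈ M := fun u hu v hv => by
    simp only [M, Set.mem_ofPred_eq] at hu hv ⊢
    exact (hP.dist_map_midpoint_le hT u v).trans (by linarith)
  have hCM : Set.MapsTo (twistedShift id) M M := fun y hy => by
    simp only [M, Set.mem_ofPred_eq] at hy ⊢
    rwa [show twistedShift f (twistedShift id y) = twistedShift id (twistedShift f y) from rfl,
      hC.dist_eq]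
  obtain ⟨z, hzM, hz⟩ := hP.exists_fixed_of_iterate_eq hM.isComplete hMm hC hCM
    (Nat.pos_of_ne_zero (NeZero.ne k)) (by simp [M]) (iterate_twistedShift_id_self y₀)
  refine ⟨z 0, fun y => ?_⟩
  rw [← eq_const_of_twistedShift_id_eq hz]
  exact hzM.trans (hy₀ y)

end TwistedShiftMinimal

theorem IsSemisimple.of_pow {E : Type*} [MetricSpace E] [CompleteSpace E] (hE : IsCAT0 E)
    {γ : E ≃ᵢ E} {k : ℕ} (hk : 0 < k) (h : IsSemisimple (γ ^ k)) : IsSemisimple γ := by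
  have : NeZero k := ⟨hk.ne'⟩
  obtain ⟨y₀, hy₀⟩ := hE.exists_forall_dist_twistedShift_le h
  obtain ⟨x, hx⟩ := hE.exists_const_forall_dist_twistedShift_le γ.isometry hy₀
  refine isSemisimple_iff_exists_forall_le.mpr ⟨x, fun x' => ?_⟩
  have h := pow_le_pow_left₀ dist_nonneg (hx (WithLp.toLp 2 fun _ => x')) 2
  rw [dist_twistedShift_const_sq, dist_twistedShift_const_sq] at h
  exact (pow_le_pow_iff_left₀ dist_nonneg dist_nonneg two_ne_zero).mp
    (le_of_mul_le_mul_left h (by exact_mod_cast hk))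

/-- If a power of an isometry `g` of the ℓ²-product `Xⁿ` of a complete CAT(0)
space preserves the factors and acts semisimply in each, then `g` is semisimple. -/
theorem semisimple_of_pow_factorwise {X : Type*} [MetricSpace X] [CompleteSpace X]
    (hX : IsCAT0 X) (n : ℕ)
    (g : (PiLp 2 fun _ : Fin n => X) ≃ᵢ (PiLp 2 fun _ : Fin n => X))
    (k : ℕ) (hk : 0 < k) (ψ : Fin n → (X ≃ᵢ X))
    (hfact : ∀ (f : PiLp 2 fun _ : Fin n => X) (i : Fin n), (g ^ k) f i = ψ i (f i))
    (hss : ∀ i, IsSemisimple (ψ i)) :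
    IsSemisimple g :=
  (IsSemisimple.of_forall_apply_eq hfact hss).of_pow (IsCAT0.piLp fun _ => hX) hk
end

section
/- Let G be a group with a finite-index central subgroup Z such that G/Z acts properly by isometries on a metric space Y. If a group Γ contains G/Z as a subgroup of finite index n, then the induced action of Γ on Yⁿ is proper. -/
/-!
If `F` and `g • F` both lie in a bounded set `B ⊆ Yⁿ`, then the coordinate `i₀` of `g • F` is
`h • F j`, where `t i₀ * g = h * t j` with `h ∈ H ≃ G ⧸ Z`. Both `F j` and `h • F j` lie in the
bounded set of all coordinates of points of `B`, so properness of the `G ⧸ Z`-action leaves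
finitely many `h`; and `g = (t i₀)⁻¹ * h * t j` is determined by `h` and `j`.
-/

open Metric Bornology

open Set

theorem IsProperAction.of_eval_eq {ι Y Q Γ : Type*} [Fintype ι] [MetricSpace Y] [Group Q]
    [Group Γ] {ρQ : Q →* (Y ≃ᵢ Y)} (hρQ : IsProperAction ρQ)
    (ρ : Γ →* ((ι → Y) ≃ᵢ (ι → Y))) (i₀ : ι) (σ : Q × ι → Γ)
    (hσ : ∀ g, ∃ q j, σ (q, j) = g ∧ ∀ F, ρ g F i₀ = ρQ q (F j)) :
    IsProperAction ρ := by
  intro B hB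
  set C : Set Y := ⋃ i, Function.eval i '' B
  have hC : IsBounded C := isBounded_iUnion.2 fun i => hB.image_eval i
  refine (((hρQ C hC).prod finite_univ).image σ).subset ?_
  rintro g ⟨F, hF, hgF⟩
  obtain ⟨q, j, rfl, hq⟩ := hσ g
  have hFj : F j ∈ C := mem_iUnion_of_mem j (mem_image_of_mem _ hF)
  have hqFj : ρQ q (F j) ∈ C := hq F ▸ mem_iUnion_of_mem i₀ (mem_image_of_mem _ hgF)
  exact ⟨(q, j), ⟨⟨F j, hFj, hqFj⟩, trivial⟩, rfl⟩

theorem induced_action_proper_general {Y : Type*} [MetricSpace Y]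
    {G : Type*} [Group G] (Z : Subgroup G) [Z.Normal]
    {Γ : Type*} [Group Γ] (H : Subgroup Γ) (n : ℕ) (hn : 0 < n)
    (e : H ≃* (G ⧸ Z))
    (ρQ : (G ⧸ Z) →* (Y ≃ᵢ Y)) (hproper : IsProperAction ρQ)
    (t : Fin n → Γ)
    (ρΓ : Γ →* ((Fin n → Y) ≃ᵢ (Fin n → Y)))
    (hind : ∀ (g : Γ) (i : Fin n), ∃ (j : Fin n) (h : Γ) (hh : h ∈ H),
        t i * g = h * t j ∧ ∀ F : Fin n → Y, ρΓ g F i = ρQ (e ⟨h, hh⟩) (F j)) :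
    IsProperAction ρΓ := by
  let i₀ : Fin n := ⟨0, hn⟩
  refine hproper.of_eval_eq ρΓ i₀ (fun p => (t i₀)⁻¹ * e.symm p.1 * t p.2) fun g => ?_
  obtain ⟨j, h, hh, hth, hF⟩ := hind g i₀
  refine ⟨e ⟨h, hh⟩, j, ?_, hF⟩
  rw [MulEquiv.symm_apply_apply, mul_assoc, ← hth, inv_mul_cancel_left]

/-- If `G` has a finite-index central subgroup `Z` and `G ⧸ Z` acts properly by
isometries on `Y`, and `Γ` contains (a copy of) `G ⧸ Z` as a subgroup `H` of
finite index `n`, then the induced action of `Γ` on `Yⁿ` is proper. -/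
theorem induced_action_proper {Y : Type*} [MetricSpace Y]
    {G : Type*} [Group G] (Z : Subgroup G) (hZc : Z ≤ Subgroup.center G)
    (hZfi : Z.FiniteIndex) [Z.Normal]
    {Γ : Type*} [Group Γ] (H : Subgroup Γ) (n : ℕ) (hn : 0 < n) (hidx : H.index = n)
    (e : H ≃* (G ⧸ Z))
    (ρQ : (G ⧸ Z) →* (Y ≃ᵢ Y)) (hproper : IsProperAction ρQ)
    (t : Fin n → Γ) (hreps : ∀ g : Γ, ∃! i : Fin n, ∃ h ∈ H, g = h * t i)
    (ρΓ : Γ →* ((Fin n → Y) ≃ᵢ (Fin n → Y)))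
    (hind : ∀ (g : Γ) (i : Fin n), ∃ (j : Fin n) (h : Γ) (hh : h ∈ H),
        t i * g = h * t j ∧ ∀ F : Fin n → Y, ρΓ g F i = ρQ (e ⟨h, hh⟩) (F j)) :
    IsProperAction ρΓ :=
  induced_action_proper_general Z H n hn e ρQ hproper t ρΓ hind
end
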